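/- Let n ≥ 2, g ≥ 2, let B = V × V^c be a block in [n] × [n], and let A₁, …, A_g, B₁, …, B_g ∈ SO(2n+1) be matrices such that for every matrix M among them and all 1 ≤ i, j ≤ n: if (i,j) ∈ B ∪ B̄ then M_{2i−1,2j−1} = −M_{2i,2j} and M_{2i,2j−1} = M_{2i−1,2j}, while if (i,j) ∉ B ∪ B̄ then M_{2i−1,2j−1} = M_{2i,2j} and M_{2i,2j−1} = −M_{2i−1,2j}. Then the product of commutators ∏_{l=1}^{g} [A_l, B_l] is not a generic element of T. (This expresses that the sections s^{−ε_B(i,j)}_{ij}(x), for all 1 ≤ i, j ≤ n and all generators x, have no common zeros.) -/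
import Mathlib


open Matrix Real

/-- Index `2i` (0-based; row `2i-1` in 1-based numbering) in `Fin (2n+1)`. -/
def ia {n : ℕ} (i : Fin n) : Fin (2*n+1) := ⟨2*i.val, by have := i.isLt; omega⟩

/-- Index `2i+1` (0-based; row `2i` in 1-based numbering) in `Fin (2n+1)`. -/
def ib {n : ℕ} (i : Fin n) : Fin (2*n+1) := ⟨2*i.val+1, by have := i.isLt; omega⟩

/-- The last index `2n` in `Fin (2n+1)`. -/
def ilast (n : ℕ) : Fin (2*n+1) := ⟨2*n, by omega⟩

/-- Membership in SO(2n+1). -/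
def SOodd (n : ℕ) (M : Matrix (Fin (2*n+1)) (Fin (2*n+1)) ℝ) : Prop :=
  M * Mᵀ = 1 ∧ M.det = 1

/-- The block-diagonal torus element `diag(R(θ₁), …, R(θₙ), 1)` of SO(2n+1). -/
noncomputable def torusMat (n : ℕ) (θ : Fin n → ℝ) :
    Matrix (Fin (2*n+1)) (Fin (2*n+1)) ℝ :=
  Matrix.of fun r c =>
    if hr : r.val < 2*n then
      if c.val < 2*n then
        if r.val / 2 = c.val / 2 then
          if r.val % 2 = 0 then
            if c.val % 2 = 0 then Real.cos (θ ⟨r.val/2, by omega⟩)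
            else -Real.sin (θ ⟨r.val/2, by omega⟩)
          else
            if c.val % 2 = 0 then Real.sin (θ ⟨r.val/2, by omega⟩)
            else Real.cos (θ ⟨r.val/2, by omega⟩)
        else 0
      else 0
    else if c.val < 2*n then 0 else 1

/-- `(θ₁, …, θₙ)` is a generic torus element: its centralizer in SO(2n+1) is exactly
the torus, and the only `λ ∈ {-1,0,1}ⁿ` with `λ·θ ∈ 2πℤ` is `λ = 0`. -/
noncomputable def IsGeneric (n : ℕ) (θ : Fin n → ℝ) : Prop :=
  (∀ M, SOodd n M → M * torusMat n θ = torusMat n θ * M →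
      ∃ φ : Fin n → ℝ, M = torusMat n φ) ∧
  (∀ lam : Fin n → ℤ, (∀ i, lam i = -1 ∨ lam i = 0 ∨ lam i = 1) →
      (∃ k : ℤ, ∑ i, (lam i : ℝ) * θ i = 2 * Real.pi * k) → ∀ i, lam i = 0)

/-- Commutator of matrices: `[P,Q] = P Q P⁻¹ Q⁻¹`. -/
noncomputable def commMat (n : ℕ) (P Q : Matrix (Fin (2*n+1)) (Fin (2*n+1)) ℝ) :
    Matrix (Fin (2*n+1)) (Fin (2*n+1)) ℝ :=
  P * Q * P⁻¹ * Q⁻¹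

namespace S5

variable {n : ℕ}

lemma ia_ne_ib (i j : Fin n) : ia i ≠ ib j := by
  simp [ia, ib, Fin.ext_iff]; omega

lemma ia_ne_ilast (i : Fin n) : ia i ≠ ilast n := by
  have := i.isLt; simp [ia, ilast, Fin.ext_iff]; omega

lemma ib_ne_ilast (i : Fin n) : ib i ≠ ilast n := by
  have := i.isLt; simp [ib, ilast, Fin.ext_iff]; omega

lemma ia_inj {i j : Fin n} : ia i = ia j ↔ i = j := by
  simp [ia, Fin.ext_iff]

lemma ib_inj {i j : Fin n} : ib i = ib j ↔ i = j := by
  simp [ib, Fin.ext_iff]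

def E (n : ℕ) : (Fin n ⊕ Fin n) ⊕ Unit ≃ Fin (2*n+1) where
  toFun x := match x with
    | .inl (.inl j) => ia j
    | .inl (.inr j) => ib j
    | .inr _ => ilast n
  invFun r :=
    if h : r.val < 2*n then
      if h2 : r.val % 2 = 0 then .inl (.inl ⟨r.val/2, by omega⟩)
      else .inl (.inr ⟨r.val/2, by omega⟩)
    else .inr ()
  left_inv x := by
    rcases x with (j | j) | u
    · have hj := j.isLt
      dsimp only [ia]
      rw [dif_pos (by omega : (2*j.val) < 2*n), dif_pos (by omega : (2*j.val) % 2 = 0)]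
      simp [Fin.ext_iff]
    · have hj := j.isLt
      dsimp only [ib]
      rw [dif_pos (by omega : (2*j.val+1) < 2*n), dif_neg (by omega : ¬(2*j.val+1) % 2 = 0)]
      simp [Fin.ext_iff]
      omega
    · dsimp only [ilast]
      rw [dif_neg (by omega : ¬(2*n) < 2*n)]
  right_inv r := by
    have hr := r.isLt
    dsimp only
    by_cases h : r.val < 2*n
    · by_cases h2 : r.val % 2 = 0
      · rw [dif_pos h, dif_pos h2]; simp [ia, Fin.ext_iff]; omega
      · rw [dif_pos h, dif_neg h2]; simp [ib, Fin.ext_iff]; omega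
    · rw [dif_neg h]; simp [ilast, Fin.ext_iff]; omega

lemma sum_split {α : Type*} [AddCommMonoid α] (f : Fin (2*n+1) → α) :
    ∑ s, f s = (∑ j : Fin n, (f (ia j) + f (ib j))) + f (ilast n) := by
  rw [← Fintype.sum_equiv (E n) (fun x => f (E n x)) f (fun x => rfl)]
  rw [Fintype.sum_sum_type, Fintype.sum_sum_type]
  simp [E, Finset.sum_add_distrib]

def GoodM (n : ℕ) (d : Fin n → ℝ) (M : Matrix (Fin (2*n+1)) (Fin (2*n+1)) ℝ) : Prop :=
  (∀ i j : Fin n, M (ia i) (ia j) = d i * d j * M (ib i) (ib j) ∧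
      M (ib i) (ia j) = -(d i * d j) * M (ia i) (ib j)) ∧
  (∀ r, r ≠ ilast n → M r (ilast n) = 0 ∧ M (ilast n) r = 0)

noncomputable def zmat (n : ℕ) (d : Fin n → ℝ) (M : Matrix (Fin (2*n+1)) (Fin (2*n+1)) ℝ) :
    Matrix (Fin n) (Fin n) ℂ :=
  Matrix.of fun i j => (M (ia i) (ia j) : ℂ) + Complex.I * (d i : ℝ) * (M (ib i) (ia j) : ℝ)

lemma good_one (d : Fin n → ℝ) (hd : ∀ i, d i = 1 ∨ d i = -1) : GoodM n d 1 := by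
  constructor
  · intro i j
    by_cases h : i = j
    · subst h
      simp [Matrix.one_apply, ia_inj, ib_inj, (ia_ne_ib i i).symm, ia_ne_ib]
      rcases hd i with h|h <;> rw [h] <;> norm_num
    · simp [Matrix.one_apply, ia_inj, ib_inj, h, ia_ne_ib,
        fun i j => (ia_ne_ib i j).symm]
  · intro r hr
    constructor <;> simp [Matrix.one_apply, hr, Ne.symm hr]

lemma good_transpose {d : Fin n → ℝ} (hd : ∀ i, d i = 1 ∨ d i = -1)
    {M : Matrix (Fin (2*n+1)) (Fin (2*n+1)) ℝ} (hM : GoodM n d M) : GoodM n d Mᵀ := by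
  obtain ⟨h1, h2⟩ := hM
  constructor
  · intro i j
    have e1 := (h1 j i).1
    have e2 := (h1 j i).2
    constructor
    · simpa [Matrix.transpose_apply, mul_comm (d j) (d i)] using e1
    · simp only [Matrix.transpose_apply]
      rcases hd i with hi|hi <;> rcases hd j with hj|hj <;>
        rw [hi, hj] at e1 e2 ⊢ <;> linarith
  · intro r hr
    exact ⟨(h2 r hr).2, (h2 r hr).1⟩

lemma good_mul {d : Fin n → ℝ} (hd : ∀ i, d i = 1 ∨ d i = -1)
    {M N : Matrix (Fin (2*n+1)) (Fin (2*n+1)) ℝ}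
    (hM : GoodM n d M) (hN : GoodM n d N) :
    GoodM n d (M * N) ∧ zmat n d (M * N) = zmat n d M * zmat n d N := by
  obtain ⟨hM1, hM2⟩ := hM
  obtain ⟨hN1, hN2⟩ := hN
  have hlastM : ∀ i : Fin n, M (ia i) (ilast n) = 0 ∧ M (ib i) (ilast n) = 0 :=
    fun i => ⟨(hM2 _ (ia_ne_ilast i)).1, (hM2 _ (ib_ne_ilast i)).1⟩
  have hlastN : ∀ j : Fin n, N (ilast n) (ia j) = 0 ∧ N (ilast n) (ib j) = 0 :=
    fun j => ⟨(hN2 _ (ia_ne_ilast j)).2, (hN2 _ (ib_ne_ilast j)).2⟩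
  refine ⟨⟨?_, ?_⟩, ?_⟩
  · intro i j
    constructor
    · rw [Matrix.mul_apply, Matrix.mul_apply, sum_split, sum_split,
        (hlastM i).1, (hlastM i).2, zero_mul, zero_mul, add_zero, add_zero,
        Finset.mul_sum]
      refine Finset.sum_congr rfl (fun k _ => ?_)
      have e1 := (hM1 i k).1
      have e2 := (hM1 i k).2
      have e3 := (hN1 k j).1
      have e4 := (hN1 k j).2
      rcases hd i with hi|hi <;> rcases hd j with hj|hj <;> rcases hd k with hk|hk <;>
        rw [hi, hk] at e1 e2 <;> rw [hk, hj] at e3 e4 <;> rw [hi, hj] <;>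
        rw [e1, e2, e3, e4] <;> ring
    · rw [Matrix.mul_apply, Matrix.mul_apply, sum_split, sum_split,
        (hlastM i).1, (hlastM i).2, zero_mul, zero_mul, add_zero, add_zero,
        Finset.mul_sum]
      refine Finset.sum_congr rfl (fun k _ => ?_)
      have e1 := (hM1 i k).1
      have e2 := (hM1 i k).2
      have e3 := (hN1 k j).1
      have e4 := (hN1 k j).2
      rcases hd i with hi|hi <;> rcases hd j with hj|hj <;> rcases hd k with hk|hk <;>
        rw [hi, hk] at e1 e2 <;> rw [hk, hj] at e3 e4 <;> rw [hi, hj] <;>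
        rw [e1, e2, e3, e4] <;> ring
  · intro r hr
    obtain ⟨hc, hr'⟩ : r.val < 2*n ∧ True := by
      refine ⟨?_, trivial⟩
      have := r.isLt
      have : r.val ≠ 2*n := by
        intro h; exact hr (by simp [ilast, Fin.ext_iff, h])
      omega
    constructor
    · rw [Matrix.mul_apply, sum_split]
      have : ∀ j : Fin n, M r (ia j) * N (ia j) (ilast n) + M r (ib j) * N (ib j) (ilast n) = 0 := by
        intro j
        rw [(hN2 _ (ia_ne_ilast j)).1, (hN2 _ (ib_ne_ilast j)).1]; ring
      rw [Finset.sum_congr rfl (fun j _ => this j), (hM2 r hr).1]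
      simp
    · rw [Matrix.mul_apply, sum_split]
      have : ∀ j : Fin n, M (ilast n) (ia j) * N (ia j) r + M (ilast n) (ib j) * N (ib j) r = 0 := by
        intro j
        rw [(hM2 _ (ia_ne_ilast j)).2, (hM2 _ (ib_ne_ilast j)).2]; ring
      rw [Finset.sum_congr rfl (fun j _ => this j), (hN2 r hr).2]
      simp
  · ext i j
    simp only [zmat, Matrix.of_apply, Matrix.mul_apply, sum_split,
      (hlastM i).1, (hlastM i).2, zero_mul, add_zero]
    push_cast
    rw [Finset.sum_add_distrib, Finset.mul_sum, ← Finset.sum_add_distrib,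
      ← Finset.sum_add_distrib]
    refine Finset.sum_congr rfl (fun k _ => ?_)
    have e1 := (hM1 i k).1
    have e2 := (hM1 i k).2
    have e3 := (hN1 k j).1
    have e4 := (hN1 k j).2
    rcases hd i with hi|hi <;> rcases hd k with hk|hk <;>
      rw [hi, hk] at e1 e2 ⊢ <;> rw [e1, e2, e3, e4] <;> push_cast <;>
      simp [Complex.ext_iff] <;> constructor <;> ring
lemma good_of (d : Fin n → ℝ) (hd : ∀ i, d i = 1 ∨ d i = -1)
    (M : Matrix (Fin (2*n+1)) (Fin (2*n+1)) ℝ) (hO : M * Mᵀ = 1)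
    (h1 : ∀ i j : Fin n, M (ia i) (ia j) = d i * d j * M (ib i) (ib j) ∧
      M (ib i) (ia j) = -(d i * d j) * M (ia i) (ib j)) :
    GoodM n d M := by
  have key0 : ∀ i : Fin n, M (ia i) (ilast n) = 0 ∧ M (ib i) (ilast n) = 0 := by
    intro i
    have h01 : (M * Mᵀ) (ia i) (ib i) = 0 := by
      rw [hO]; exact Matrix.one_apply_ne (ia_ne_ib i i)
    have h02 : (M * Mᵀ) (ia i) (ia i) = 1 := by rw [hO]; simp [Matrix.one_apply]
    have h03 : (M * Mᵀ) (ib i) (ib i) = 1 := by rw [hO]; simp [Matrix.one_apply]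
    rw [Matrix.mul_apply, sum_split] at h01 h02 h03
    simp only [Matrix.transpose_apply] at h01 h02 h03
    have e01 : ∀ j : Fin n,
        M (ia i) (ia j) * M (ib i) (ia j) + M (ia i) (ib j) * M (ib i) (ib j) = 0 := by
      intro j
      have e1 := (h1 i j).1
      have e2 := (h1 i j).2
      rcases hd i with hi|hi <;> rcases hd j with hj|hj <;> rw [hi, hj] at e1 e2 <;>
        rw [e1, e2] <;> ring
    have e02 : ∀ j : Fin n,
        M (ia i) (ia j) * M (ia i) (ia j) + M (ia i) (ib j) * M (ia i) (ib j) =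
        M (ib i) (ia j) * M (ib i) (ia j) + M (ib i) (ib j) * M (ib i) (ib j) := by
      intro j
      have e1 := (h1 i j).1
      have e2 := (h1 i j).2
      rcases hd i with hi|hi <;> rcases hd j with hj|hj <;> rw [hi, hj] at e1 e2 <;>
        rw [e1, e2] <;> ring
    rw [Finset.sum_congr rfl (fun j _ => e01 j), Finset.sum_const_zero, zero_add] at h01
    rw [Finset.sum_congr rfl (fun j _ => e02 j)] at h02
    have hsq : M (ia i) (ilast n) * M (ia i) (ilast n)
        = M (ib i) (ilast n) * M (ib i) (ilast n) := by linarith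
    rcases mul_eq_zero.mp h01 with h|h
    · refine ⟨h, ?_⟩
      rw [h] at hsq
      exact mul_self_eq_zero.mp (by linarith)
    · refine ⟨?_, h⟩
      rw [h] at hsq
      exact mul_self_eq_zero.mp (by linarith)
  have hO' : Mᵀ * M = 1 := mul_eq_one_comm.mp hO
  have hm : M (ilast n) (ilast n) * M (ilast n) (ilast n) = 1 := by
    have h04 : (Mᵀ * M) (ilast n) (ilast n) = 1 := by rw [hO']; simp [Matrix.one_apply]
    rw [Matrix.mul_apply, sum_split] at h04
    simp only [Matrix.transpose_apply] at h04
    have : ∀ j : Fin n,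
        M (ia j) (ilast n) * M (ia j) (ilast n) + M (ib j) (ilast n) * M (ib j) (ilast n) = 0 := by
      intro j; rw [(key0 j).1, (key0 j).2]; ring
    rw [Finset.sum_congr rfl (fun j _ => this j), Finset.sum_const_zero, zero_add] at h04
    exact h04
  have key1 : ∀ c, c ≠ ilast n → M (ilast n) c = 0 := by
    intro c hc
    have h05 : (Mᵀ * M) (ilast n) c = 0 := by
      rw [hO']; exact Matrix.one_apply_ne (Ne.symm hc)
    rw [Matrix.mul_apply, sum_split] at h05
    simp only [Matrix.transpose_apply] at h05
    have : ∀ j : Fin n,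
        M (ia j) (ilast n) * M (ia j) c + M (ib j) (ilast n) * M (ib j) c = 0 := by
      intro j; rw [(key0 j).1, (key0 j).2]; ring
    rw [Finset.sum_congr rfl (fun j _ => this j), Finset.sum_const_zero, zero_add] at h05
    have hm0 : M (ilast n) (ilast n) ≠ 0 := by
      intro h; rw [h] at hm; norm_num at hm
    exact (mul_eq_zero.mp h05).resolve_left hm0
  refine ⟨h1, ?_⟩
  intro r hr
  have hrv : r.val < 2*n := by
    have h2 := r.isLt
    have : r.val ≠ 2*n := fun h => hr (by simp [ilast, Fin.ext_iff, h])
    omega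
  have : r = ia ⟨r.val/2, by omega⟩ ∨ r = ib ⟨r.val/2, by omega⟩ := by
    by_cases h2 : r.val % 2 = 0
    · left; simp [ia, Fin.ext_iff]; omega
    · right; simp [ib, Fin.ext_iff]; omega
  rcases this with h|h
  · exact ⟨h ▸ (key0 _).1, key1 r hr⟩
  · exact ⟨h ▸ (key0 _).2, key1 r hr⟩
lemma z_one (d : Fin n → ℝ) : zmat n d 1 = 1 := by
  ext i j
  have h1 : (1 : Matrix (Fin (2*n+1)) (Fin (2*n+1)) ℝ) (ib i) (ia j) = 0 :=
    Matrix.one_apply_ne (Ne.symm (ia_ne_ib j i))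
  simp only [zmat, Matrix.of_apply]
  rw [h1]
  by_cases h : i = j
  · subst h
    rw [Matrix.one_apply_eq, Matrix.one_apply_eq]
    push_cast; ring
  · rw [Matrix.one_apply_ne (fun hc => h (ia_inj.mp hc)), Matrix.one_apply_ne h]
    push_cast; ring

lemma torus_aa (θ : Fin n → ℝ) (i j : Fin n) :
    torusMat n θ (ia i) (ia j) = if i = j then Real.cos (θ i) else 0 := by
  have hi := i.isLt; have hj := j.isLt
  simp only [torusMat, Matrix.of_apply, ia, Fin.val_mk]
  rw [dif_pos (by omega), if_pos (by omega)]
  by_cases h : i = j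
  · subst h
    rw [if_pos rfl, if_pos (by omega), if_pos (by omega), if_pos rfl]
    have h2 : 2 * (i:ℕ) / 2 = (i:ℕ) := by omega
    simp [h2]
  · rw [if_neg, if_neg h]
    intro hc
    exact h (Fin.ext (by omega))

lemma torus_ba (θ : Fin n → ℝ) (i j : Fin n) :
    torusMat n θ (ib i) (ia j) = if i = j then Real.sin (θ i) else 0 := by
  have hi := i.isLt; have hj := j.isLt
  simp only [torusMat, Matrix.of_apply, ia, ib, Fin.val_mk]
  rw [dif_pos (by omega), if_pos (by omega)]
  by_cases h : i = j
  · subst h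
    rw [if_pos (by omega), if_neg (by omega), if_pos (by omega), if_pos rfl]
    have h2 : (2 * (i:ℕ) + 1) / 2 = (i:ℕ) := by omega
    simp [h2]
  · rw [if_neg, if_neg h]
    intro hc
    exact h (Fin.ext (by omega))

lemma z_torus (d : Fin n → ℝ) (θ : Fin n → ℝ) :
    zmat n d (torusMat n θ) =
      Matrix.diagonal (fun i => (Real.cos (θ i) : ℂ) + Complex.I * d i * Real.sin (θ i)) := by
  ext i j
  by_cases h : i = j
  · subst h; simp [zmat, torus_aa, torus_ba, Matrix.diagonal]
  · simp [zmat, torus_aa, torus_ba, Matrix.diagonal, h]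

lemma exp_form (d : Fin n → ℝ) (hd : ∀ i, d i = 1 ∨ d i = -1) (θ : Fin n → ℝ) (i : Fin n) :
    (Real.cos (θ i) : ℂ) + Complex.I * d i * Real.sin (θ i)
      = Complex.exp ((d i * θ i : ℝ) * Complex.I) := by
  rcases hd i with h|h <;> rw [h] <;> push_cast <;> rw [Complex.exp_mul_I] <;>
    simp [← Complex.ofReal_cos, ← Complex.ofReal_sin] <;> ring

lemma det_z_torus (d : Fin n → ℝ) (hd : ∀ i, d i = 1 ∨ d i = -1) (θ : Fin n → ℝ)
    (hdet : (zmat n d (torusMat n θ)).det = 1) :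
    ∃ k : ℤ, ∑ i, d i * θ i = 2 * Real.pi * k := by
  rw [z_torus, Matrix.det_diagonal] at hdet
  rw [Finset.prod_congr rfl (fun i _ => exp_form d hd θ i), ← Complex.exp_sum] at hdet
  have hsum : ∑ i : Fin n, ((d i * θ i : ℝ) : ℂ) * Complex.I
      = ((∑ i, d i * θ i : ℝ) : ℂ) * Complex.I := by
    push_cast; rw [Finset.sum_mul]
  rw [hsum] at hdet
  obtain ⟨k, hk⟩ := Complex.exp_eq_one_iff.mp hdet
  refine ⟨k, ?_⟩
  have h2 : ((∑ i, d i * θ i : ℝ) : ℂ) = ((2 * Real.pi * k : ℝ) : ℂ) := by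
    have := mul_right_cancel₀ Complex.I_ne_zero
      (hk.trans (by push_cast; ring : (k : ℂ) * (2 * ↑Real.pi * Complex.I)
        = ((2 * Real.pi * k : ℝ) : ℂ) * Complex.I))
    exact this
  exact_mod_cast h2
lemma zdet_transpose_mul {d : Fin n → ℝ} (hd : ∀ i, d i = 1 ∨ d i = -1)
    {M : Matrix (Fin (2*n+1)) (Fin (2*n+1)) ℝ} (hM : GoodM n d M) (hO : M * Mᵀ = 1) :
    (zmat n d Mᵀ).det * (zmat n d M).det = 1 := by
  have h := (good_mul hd (good_transpose hd hM) hM).2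
  rw [mul_eq_one_comm.mp hO, z_one] at h
  rw [← Matrix.det_mul, ← h, Matrix.det_one]

lemma good_comm {d : Fin n → ℝ} (hd : ∀ i, d i = 1 ∨ d i = -1)
    {P Q : Matrix (Fin (2*n+1)) (Fin (2*n+1)) ℝ}
    (hP : GoodM n d P) (hQ : GoodM n d Q) (hOP : P * Pᵀ = 1) (hOQ : Q * Qᵀ = 1) :
    GoodM n d (commMat n P Q) ∧ (zmat n d (commMat n P Q)).det = 1 := by
  have hiP : P⁻¹ = Pᵀ := Matrix.inv_eq_right_inv hOP
  have hiQ : Q⁻¹ = Qᵀ := Matrix.inv_eq_right_inv hOQ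
  have hPt := good_transpose hd hP
  have hQt := good_transpose hd hQ
  have h1 := good_mul hd hP hQ
  have h2 := good_mul hd h1.1 hPt
  have h3 := good_mul hd h2.1 hQt
  have hcm : commMat n P Q = P * Q * Pᵀ * Qᵀ := by rw [commMat, hiP, hiQ]
  refine ⟨hcm ▸ h3.1, ?_⟩
  rw [hcm, h3.2, h2.2, h1.2, Matrix.det_mul, Matrix.det_mul, Matrix.det_mul]
  have e1 := zdet_transpose_mul hd hP hOP
  have e2 := zdet_transpose_mul hd hQ hOQ
  calc (zmat n d P).det * (zmat n d Q).det * (zmat n d Pᵀ).det * (zmat n d Qᵀ).det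
      = ((zmat n d Pᵀ).det * (zmat n d P).det) * ((zmat n d Qᵀ).det * (zmat n d Q).det) := by ring
    _ = 1 := by rw [e1, e2, one_mul]

lemma list_good {d : Fin n → ℝ} (hd : ∀ i, d i = 1 ∨ d i = -1) :
    ∀ L : List (Matrix (Fin (2*n+1)) (Fin (2*n+1)) ℝ),
      (∀ M ∈ L, GoodM n d M ∧ (zmat n d M).det = 1) →
      GoodM n d L.prod ∧ (zmat n d L.prod).det = 1 := by
  intro L
  induction L with
  | nil => intro _; rw [List.prod_nil]; exact ⟨good_one d hd, by rw [z_one d, Matrix.det_one]⟩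
  | cons M L ih =>
    intro h
    have hM := h M (by simp)
    have hL := ih (fun N hN => h N (by simp [hN]))
    have hmul := good_mul hd hM.1 hL.1
    rw [List.prod_cons]
    refine ⟨hmul.1, ?_⟩
    rw [hmul.2, Matrix.det_mul, hM.2, hL.2, one_mul]
end S5

open S5 in
theorem stmt5 (n g : ℕ) (hn : 2 ≤ n) (hg : 2 ≤ g)
    (V : Finset (Fin n)) (hV : V.Nonempty ∧ V ≠ Finset.univ)
    (B : Finset (Fin n × Fin n)) (hB : B = V ×ˢ Vᶜ)
    (A C : Fin g → Matrix (Fin (2*n+1)) (Fin (2*n+1)) ℝ)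
    (hSOA : ∀ l, SOodd n (A l)) (hSOC : ∀ l, SOodd n (C l))
    (hA : ∀ l (i j : Fin n),
      ((i, j) ∈ B ∪ B.image Prod.swap →
        A l (ia i) (ia j) = -(A l (ib i) (ib j)) ∧ A l (ib i) (ia j) = A l (ia i) (ib j)) ∧
      ((i, j) ∉ B ∪ B.image Prod.swap →
        A l (ia i) (ia j) = A l (ib i) (ib j) ∧ A l (ib i) (ia j) = -(A l (ia i) (ib j))))
    (hC : ∀ l (i j : Fin n),
      ((i, j) ∈ B ∪ B.image Prod.swap →
        C l (ia i) (ia j) = -(C l (ib i) (ib j)) ∧ C l (ib i) (ia j) = C l (ia i) (ib j)) ∧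
      ((i, j) ∉ B ∪ B.image Prod.swap →
        C l (ia i) (ia j) = C l (ib i) (ib j) ∧ C l (ib i) (ia j) = -(C l (ia i) (ib j))))
    (θ : Fin n → ℝ) (hgen : IsGeneric n θ) :
    ((List.finRange g).map (fun l => commMat n (A l) (C l))).prod ≠ torusMat n θ := by
  intro heq
  set d : Fin n → ℝ := fun i => if i ∈ V then -1 else 1 with hd_def
  have hd : ∀ i, d i = 1 ∨ d i = -1 := by
    intro i; by_cases h : i ∈ V <;> simp [hd_def, h]
  have hmem : ∀ i j : Fin n, ((i, j) ∈ B ∪ B.image Prod.swap ↔ d i * d j = -1) := by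
    intro i j
    have hiff : ((i, j) ∈ B ∪ B.image Prod.swap) ↔ ((i ∈ V ∧ j ∉ V) ∨ (j ∈ V ∧ i ∉ V)) := by
      subst hB
      simp only [Finset.mem_union, Finset.mem_product, Finset.mem_image, Finset.mem_compl]
      constructor
      · rintro (⟨h1, h2⟩ | ⟨⟨x, y⟩, ⟨hx, hy⟩, hs⟩)
        · exact Or.inl ⟨h1, h2⟩
        · have hxy : y = i ∧ x = j := by simpa [Prod.ext_iff, Prod.swap] using hs
          exact Or.inr ⟨hxy.2 ▸ hx, hxy.1 ▸ hy⟩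
      · rintro (⟨h1, h2⟩ | ⟨h1, h2⟩)
        · exact Or.inl ⟨h1, h2⟩
        · exact Or.inr ⟨(j, i), ⟨h1, h2⟩, rfl⟩
    rw [hiff, hd_def]
    by_cases hi : i ∈ V <;> by_cases hj : j ∈ V <;> simp [hi, hj] <;> norm_num
  have hrel : ∀ (M : Matrix (Fin (2*n+1)) (Fin (2*n+1)) ℝ),
      (∀ i j : Fin n,
        ((i, j) ∈ B ∪ B.image Prod.swap →
          M (ia i) (ia j) = -(M (ib i) (ib j)) ∧ M (ib i) (ia j) = M (ia i) (ib j)) ∧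
        ((i, j) ∉ B ∪ B.image Prod.swap →
          M (ia i) (ia j) = M (ib i) (ib j) ∧ M (ib i) (ia j) = -(M (ia i) (ib j)))) →
      ∀ i j : Fin n, M (ia i) (ia j) = d i * d j * M (ib i) (ib j) ∧
        M (ib i) (ia j) = -(d i * d j) * M (ia i) (ib j) := by
    intro M hM i j
    by_cases hm : (i, j) ∈ B ∪ B.image Prod.swap
    · have hdd : d i * d j = -1 := (hmem i j).mp hm
      obtain ⟨ha, hb⟩ := (hM i j).1 hm
      rw [hdd]; constructor <;> linarith
    · have hdd : d i * d j = 1 := by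
        rcases hd i with h|h <;> rcases hd j with h'|h' <;> rw [h, h'] <;> norm_num
        all_goals { exfalso; apply hm; rw [hmem i j, h, h']; norm_num }
      obtain ⟨ha, hb⟩ := (hM i j).2 hm
      rw [hdd]; constructor <;> linarith
  have hGoodA : ∀ l, GoodM n d (A l) :=
    fun l => good_of d hd (A l) (hSOA l).1 (hrel (A l) (hA l))
  have hGoodC : ∀ l, GoodM n d (C l) :=
    fun l => good_of d hd (C l) (hSOC l).1 (hrel (C l) (hC l))
  have hlist := list_good hd ((List.finRange g).map (fun l => commMat n (A l) (C l)))
    (by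
      intro M hM
      obtain ⟨l, _, rfl⟩ := List.mem_map.mp hM
      exact good_comm hd (hGoodA l) (hGoodC l) (hSOA l).1 (hSOC l).1)
  rw [heq] at hlist
  obtain ⟨k, hk⟩ := det_z_torus d hd θ hlist.2
  set lam : Fin n → ℤ := fun i => if i ∈ V then -1 else 1 with hlam_def
  have hlam : ∀ i, lam i = -1 ∨ lam i = 0 ∨ lam i = 1 := by
    intro i; by_cases h : i ∈ V <;> simp [hlam_def, h]
  have hsum : ∑ i, (lam i : ℝ) * θ i = 2 * Real.pi * k := by
    rw [← hk]
    refine Finset.sum_congr rfl (fun i _ => ?_)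
    by_cases h : i ∈ V <;> simp [hlam_def, hd_def, h]
  have := hgen.2 lam hlam ⟨k, hsum⟩ ⟨0, by omega⟩
  by_cases h : (⟨0, by omega⟩ : Fin n) ∈ V <;> simp [hlam_def, h] at this
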